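/- arXiv:1707.08652 — 3 statements merged into one kernel-verified Lean document; each statement's English description precedes it below -/
import Mathlib

section
/- For every n ≥ 6, removing any single cycle edge v_i v_{i+1} from G_n yields a planar graph. -/
/-!
Deleting the cycle edge `vᵢvᵢ₊₁` from `Gₙ` leaves the path `vᵢ₊₁, …, vᵢ` together with the two
poles. In a minor model at most two branch sets contain a pole; every other branch set is a
connected set of path vertices, hence an interval of the path. These intervals are linearly
ordered and only neighbouring ones can be joined by an edge, so each of them lies between any two
branch sets it is joined to. Deleting two vertices from `K₅` leaves a triangle, and from `K₃,₃`
a claw or a `4`-cycle, and none of these admits such an order.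
-/

open SimpleGraph

/-- `H` is a minor of `G`: there are nonempty, pairwise disjoint, connected branch
sets in `G`, one for each vertex of `H`, with an edge of `G` between the branch
sets of any two adjacent vertices of `H`. -/
def IsMinor {W V : Type*} (H : SimpleGraph W) (G : SimpleGraph V) : Prop :=
  ∃ f : W → Set V,
    (∀ w, (f w).Nonempty) ∧
    (∀ w, (G.induce (f w)).Connected) ∧
    (Pairwise fun w₁ w₂ => Disjoint (f w₁) (f w₂)) ∧
    ∀ ⦃a b⦄, H.Adj a b → ∃ u ∈ f a, ∃ v ∈ f b, G.Adj u v

/-- Planarity, via Wagner's theorem: a graph is planar iff it has neither a `K₅`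
minor nor a `K₃,₃` minor. -/
def IsPlanar {V : Type*} (G : SimpleGraph V) : Prop :=
  ¬ IsMinor (completeGraph (Fin 5)) G ∧
  ¬ IsMinor (completeBipartiteGraph (Fin 3) (Fin 3)) G

/-- The join of two graphs: their disjoint union plus all edges in between. -/
def Join {α β : Type*} (G : SimpleGraph α) (H : SimpleGraph β) :
    SimpleGraph (α ⊕ β) where
  Adj x y := match x, y with
    | .inl a, .inl b => G.Adj a b
    | .inl _, .inr _ => True
    | .inr _, .inl _ => True
    | .inr a, .inr b => H.Adj a b
  symm := ⟨by rintro (a | a) (b | b) h <;> first | exact h.symm | trivial⟩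
  loopless := ⟨by rintro (a | a) h <;> exact h.ne rfl⟩

/-- The graph `Gₙ`: a cycle on `n - 2` vertices, two poles `p = Sum.inr 0` and
`q = Sum.inr 1` adjacent to all cycle vertices, and the pole edge `pq`. -/
def Gn (n : ℕ) : SimpleGraph (Fin (n - 2) ⊕ Fin 2) :=
  Join (cycleGraph (n - 2)) (⊤ : SimpleGraph (Fin 2))

open Set

variable {V W : Type*}

/-- `G` restricted to `S` is a subgraph of a path, numbered by `g`. -/
def IsPathLayout (G : SimpleGraph V) (S : Set V) (g : V → ℕ) : Prop :=
  S.InjOn g ∧ ∀ ⦃u v⦄, u ∈ S → v ∈ S → G.Adj u v → g v ≤ g u + 1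

/-- `H` restricted to `T` is a subgraph of a path, ordered by `φ`. -/
def HasPathOrder (H : SimpleGraph W) (T : Set W) : Prop :=
  ∃ φ : W → ℕ, ∀ ⦃a b c⦄, a ∈ T → b ∈ T → c ∈ T → H.Adj a b → H.Adj b c → a ≠ c →
    φ a < φ b ∧ φ b < φ c ∨ φ c < φ b ∧ φ b < φ a

theorem SimpleGraph.Walk.exists_eq_of_le_of_le {H : SimpleGraph V} {h : V → ℕ}
    (hstep : ∀ ⦃x y⦄, H.Adj x y → h y ≤ h x + 1) {x y : V} (w : H.Walk x y) {k : ℕ}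
    (hx : h x ≤ k) (hy : k ≤ h y) : ∃ z, h z = k := by
  induction w with
  | nil => exact ⟨_, le_antisymm hx hy⟩
  | cons hadj w ih =>
    rcases hx.eq_or_lt with hx | hx
    · exact ⟨_, hx⟩
    · exact ih (by linarith [hstep hadj]) hy

theorem Fin.val_sub_eq_ite {m : ℕ} (a b : Fin m) :
    ((a - b : Fin m) : ℕ) = if b ≤ a then (a : ℕ) - b else m + a - b := by
  split_ifs with h
  · exact Fin.coe_sub_iff_le.mpr h
  · exact Fin.coe_sub_iff_lt.mpr (not_le.mp h)

namespace IsPathLayout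

variable {G : SimpleGraph V} {S : Set V} {g : V → ℕ}

theorem mem_of_le_of_le (hg : IsPathLayout G S g) {A : Set V} (hAS : A ⊆ S)
    (hA : (G.induce A).Preconnected) {x y b : V} (hx : x ∈ A) (hy : y ∈ A) (hb : b ∈ S)
    (hxb : g x ≤ g b) (hby : g b ≤ g y) : b ∈ A := by
  obtain ⟨w⟩ := hA ⟨x, hx⟩ ⟨y, hy⟩
  obtain ⟨z, hz⟩ := w.exists_eq_of_le_of_le (h := fun z : A => g z)
    (fun u v huv => hg.2 (hAS u.2) (hAS v.2) huv) hxb hby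
  exact hg.1 (hAS z.2) hb hz ▸ z.2

/-- The union of `A` and `B` is connected, hence an interval of the numbering. -/
theorem outside_of_adj (hg : IsPathLayout G S g) {A B : Set V} (hAS : A ⊆ S) (hBS : B ⊆ S)
    (hA : (G.induce A).Preconnected) (hB : (G.induce B).Preconnected)
    {u v : V} (hu : u ∈ A) (hv : v ∈ B) (huv : G.Adj u v)
    {x y z : V} (hx : x ∈ A) (hy : y ∈ B) (hz : z ∈ S) (hzA : z ∉ A) (hzB : z ∉ B) :
    g z < g x ∧ g z < g y ∨ g x < g z ∧ g y < g z := by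
  have hAB := (connected_induce_union hA hB hu hv huv).preconnected
  have hzAB : z ∉ A ∪ B := fun h => h.elim hzA hzB
  have avoid : ∀ s ∈ A ∪ B, ∀ t ∈ A ∪ B, g z < g s ∨ g t < g z := by
    intro s hs t ht
    by_contra! hst
    exact hzAB (hg.mem_of_le_of_le (union_subset hAS hBS) hAB hs ht hz hst.1 hst.2)
  have := avoid x (.inl hx) x (.inl hx)
  have := avoid y (.inr hy) y (.inr hy)
  have := avoid x (.inl hx) y (.inr hy)
  have := avoid y (.inr hy) x (.inl hx)
  omega

variable {H : SimpleGraph W}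

theorem hasPathOrder_of_isMinor (hg : IsPathLayout G S g) {f : W → Set V}
    (hne : ∀ w, (f w).Nonempty) (hconn : ∀ w, (G.induce (f w)).Connected)
    (hdisj : Pairwise fun w₁ w₂ => Disjoint (f w₁) (f w₂))
    (hadj : ∀ ⦃a b⦄, H.Adj a b → ∃ u ∈ f a, ∃ v ∈ f b, G.Adj u v) :
    HasPathOrder H {w | f w ⊆ S} := by
  choose r hr using hne
  have outside : ∀ ⦃a b c⦄, f a ⊆ S → f b ⊆ S → f c ⊆ S → H.Adj a b → c ≠ a → c ≠ b →
      g (r c) < g (r a) ∧ g (r c) < g (r b) ∨ g (r a) < g (r c) ∧ g (r b) < g (r c) := by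
    intro a b c ha hb hc hab hca hcb
    obtain ⟨u, hu, v, hv, huv⟩ := hadj hab
    exact hg.outside_of_adj ha hb (hconn a).preconnected (hconn b).preconnected hu hv huv
      (hr a) (hr b) (hc (hr c)) (disjoint_left.mp (hdisj hca) (hr c))
      (disjoint_left.mp (hdisj hcb) (hr c))
  refine ⟨fun w => g (r w), fun a b c ha hb hc hab hbc hac => ?_⟩
  dsimp only
  have h₁ := outside ha hb hc hab hac.symm hbc.ne'
  have h₂ := outside hb hc ha hbc hab.ne hac
  omega

end IsPathLayout

theorem exists_forall_ne_notMem_pair [Nonempty W] {f : W → Set V}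
    (hdisj : Pairwise fun w₁ w₂ => Disjoint (f w₁) (f w₂)) (p q : V) :
    ∃ w₁ w₂ : W, ∀ w, w ≠ w₁ → w ≠ w₂ → p ∉ f w ∧ q ∉ f w := by
  have owner : ∀ x, ∃ w₀, ∀ w, w ≠ w₀ → x ∉ f w := by
    intro x
    by_cases hx : ∃ w₀, x ∈ f w₀
    · obtain ⟨w₀, hw₀⟩ := hx
      exact ⟨w₀, fun w hw hxw => disjoint_left.mp (hdisj hw) hxw hw₀⟩
    · exact ⟨Classical.arbitrary W, fun w _ hxw => hx ⟨w, hxw⟩⟩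
  obtain ⟨w₁, h₁⟩ := owner p
  obtain ⟨w₂, h₂⟩ := owner q
  exact ⟨w₁, w₂, fun w hw₁ hw₂ => ⟨h₁ w hw₁, h₂ w hw₂⟩⟩

theorem IsPathLayout.exists_hasPathOrder_compl_pair {G : SimpleGraph V} {S : Set V}
    {g : V → ℕ} {p q : V} (hg : IsPathLayout G S g) (hS : Sᶜ ⊆ {p, q}) [Nonempty W]
    {H : SimpleGraph W} (hm : IsMinor H G) : ∃ w₁ w₂ : W, HasPathOrder H {w₁, w₂}ᶜ := by
  obtain ⟨f, hne, hconn, hdisj, hadj⟩ := hm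
  obtain ⟨w₁, w₂, hpoles⟩ := exists_forall_ne_notMem_pair hdisj p q
  obtain ⟨φ, hφ⟩ := hg.hasPathOrder_of_isMinor hne hconn hdisj hadj
  have hT : ∀ w ∈ ({w₁, w₂} : Set W)ᶜ, f w ⊆ S := by
    intro w hw x hx
    by_contra hxS
    simp only [mem_compl_iff, mem_insert_iff, mem_singleton_iff, not_or] at hw
    rcases hS hxS with rfl | rfl
    exacts [(hpoles w hw.1 hw.2).1 hx, (hpoles w hw.1 hw.2).2 hx]
  exact ⟨w₁, w₂, φ, fun a b c ha hb hc => hφ (hT a ha) (hT b hb) (hT c hc)⟩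

namespace HasPathOrder

variable {H : SimpleGraph W} {T : Set W}

theorem not_triangle (hT : HasPathOrder H T) {a b c : W} (ha : a ∈ T) (hb : b ∈ T)
    (hc : c ∈ T) (hab : H.Adj a b) (hbc : H.Adj b c) (hca : H.Adj c a) : False := by
  obtain ⟨φ, hφ⟩ := hT
  have := hφ ha hb hc hab hbc hca.ne'
  have := hφ hb hc ha hbc hca hab.ne'
  omega

theorem not_claw (hT : HasPathOrder H T) {x y₁ y₂ y₃ : W} (hx : x ∈ T) (h₁ : y₁ ∈ T)
    (h₂ : y₂ ∈ T) (h₃ : y₃ ∈ T) (hx₁ : H.Adj x y₁) (hx₂ : H.Adj x y₂) (hx₃ : H.Adj x y₃)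
    (h₁₂ : y₁ ≠ y₂) (h₁₃ : y₁ ≠ y₃) (h₂₃ : y₂ ≠ y₃) : False := by
  obtain ⟨φ, hφ⟩ := hT
  have := hφ h₁ hx h₂ hx₁.symm hx₂ h₁₂
  have := hφ h₁ hx h₃ hx₁.symm hx₃ h₁₃
  have := hφ h₂ hx h₃ hx₂.symm hx₃ h₂₃
  omega

theorem not_square (hT : HasPathOrder H T) {a b c d : W} (ha : a ∈ T) (hb : b ∈ T)
    (hc : c ∈ T) (hd : d ∈ T) (hab : H.Adj a b) (hbc : H.Adj b c) (hcd : H.Adj c d)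
    (hda : H.Adj d a) (hac : a ≠ c) (hbd : b ≠ d) : False := by
  obtain ⟨φ, hφ⟩ := hT
  have := hφ ha hb hc hab hbc hac
  have := hφ hc hd ha hcd hda hac.symm
  have := hφ hd ha hb hda hab hbd.symm
  omega

end HasPathOrder

theorem completeGraph_fin_five_not_hasPathOrder (w₁ w₂ : Fin 5) :
    ¬ HasPathOrder (completeGraph (Fin 5)) {w₁, w₂}ᶜ := by
  obtain ⟨a, b, c, hab, hbc, hca, ha, hb, hc⟩ : ∃ a b c : Fin 5, a ≠ b ∧ b ≠ c ∧ c ≠ a ∧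
      (a ≠ w₁ ∧ a ≠ w₂) ∧ (b ≠ w₁ ∧ b ≠ w₂) ∧ (c ≠ w₁ ∧ c ≠ w₂) := by
    revert w₁ w₂; decide
  exact fun hT => hT.not_triangle (by simpa) (by simpa) (by simpa) hab hbc hca

theorem fin_three_exists_ne_ne (a₁ a₂ : Fin 3) : ∃ a, a ≠ a₁ ∧ a ≠ a₂ := by
  revert a₁ a₂; decide

theorem fin_three_exists_pair_ne (a₀ : Fin 3) : ∃ a b, a ≠ b ∧ a ≠ a₀ ∧ b ≠ a₀ := by
  revert a₀; decide

theorem completeBipartiteGraph_fin_three_not_hasPathOrder (w₁ w₂ : Fin 3 ⊕ Fin 3) :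
    ¬ HasPathOrder (completeBipartiteGraph (Fin 3) (Fin 3)) {w₁, w₂}ᶜ := by
  intro hT
  rcases w₁ with a₁ | b₁ <;> rcases w₂ with a₂ | b₂
  · obtain ⟨a, h₁, h₂⟩ := fin_three_exists_ne_ne a₁ a₂
    exact hT.not_claw (x := .inl a) (y₁ := .inr 0) (y₂ := .inr 1) (y₃ := .inr 2)
      (by simp [h₁, h₂]) (by simp) (by simp) (by simp) (by simp) (by simp) (by simp)
      (by simp) (by simp) (by simp)
  · obtain ⟨a, a', ha, h, h'⟩ := fin_three_exists_pair_ne a₁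
    obtain ⟨b, b', hb, k, k'⟩ := fin_three_exists_pair_ne b₂
    exact hT.not_square (a := .inl a) (b := .inr b) (c := .inl a') (d := .inr b')
      (by simp [h]) (by simp [k]) (by simp [h']) (by simp [k']) (by simp) (by simp) (by simp)
      (by simp) (by simp [ha]) (by simp [hb])
  · obtain ⟨a, a', ha, h, h'⟩ := fin_three_exists_pair_ne a₂
    obtain ⟨b, b', hb, k, k'⟩ := fin_three_exists_pair_ne b₁
    exact hT.not_square (a := .inl a) (b := .inr b) (c := .inl a') (d := .inr b')
      (by simp [h]) (by simp [k]) (by simp [h']) (by simp [k']) (by simp) (by simp) (by simp)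
      (by simp) (by simp [ha]) (by simp [hb])
  · obtain ⟨b, h₁, h₂⟩ := fin_three_exists_ne_ne b₁ b₂
    exact hT.not_claw (x := .inr b) (y₁ := .inl 0) (y₂ := .inl 1) (y₃ := .inl 2)
      (by simp [h₁, h₂]) (by simp) (by simp) (by simp) (by simp) (by simp) (by simp)
      (by simp) (by simp) (by simp)

theorem IsPathLayout.isPlanar {G : SimpleGraph V} {S : Set V} {g : V → ℕ} {p q : V}
    (hg : IsPathLayout G S g) (hS : Sᶜ ⊆ {p, q}) : IsPlanar G := by
  constructor
  · intro hm
    obtain ⟨w₁, w₂, hT⟩ := hg.exists_hasPathOrder_compl_pair hS hm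
    exact completeGraph_fin_five_not_hasPathOrder w₁ w₂ hT
  · intro hm
    obtain ⟨w₁, w₂, hT⟩ := hg.exists_hasPathOrder_compl_pair hS hm
    exact completeBipartiteGraph_fin_three_not_hasPathOrder w₁ w₂ hT

/-- Position along the path left by cutting the cycle just before `j`; vertices outside the cycle
get the junk value `0`. -/
def cutPosition {m : ℕ} {β : Type*} (j : Fin m) : Fin m ⊕ β → ℕ :=
  Sum.elim (fun v => ((v - j : Fin m) : ℕ)) fun _ => 0

theorem cycleGraph_cutPosition_le {m : ℕ} (h : 1 < m) {i a b : Fin m}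
    (hab : (cycleGraph m).Adj a b)
    (hcut : ¬ (a = i ∧ b = i + ⟨1, h⟩ ∨ a = i + ⟨1, h⟩ ∧ b = i)) :
    ((b - (i + ⟨1, h⟩) : Fin m) : ℕ) ≤ ((a - (i + ⟨1, h⟩) : Fin m) : ℕ) + 1 := by
  rw [cycleGraph_adj'] at hab
  simp only [Fin.ext_iff, Fin.val_sub_eq_ite, Fin.val_add_eq_ite, Fin.le_def] at hab hcut ⊢
  have := a.isLt; have := b.isLt; have := i.isLt
  split_ifs at hab hcut ⊢ <;> omega

theorem isPathLayout_join_cycleGraph_deleteEdges {m : ℕ} (h : 1 < m) (i : Fin m)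
    {β : Type*} (K : SimpleGraph β) :
    IsPathLayout ((Join (cycleGraph m) K).deleteEdges {s(.inl i, .inl (i + ⟨1, h⟩))})
      (range Sum.inl) (cutPosition (i + ⟨1, h⟩)) := by
  have : NeZero m := ⟨by omega⟩
  constructor
  · rintro _ ⟨a, rfl⟩ _ ⟨b, rfl⟩ hab
    exact congrArg Sum.inl (sub_left_injective (Fin.ext hab))
  · rintro _ _ ⟨a, rfl⟩ ⟨b, rfl⟩ ⟨hab, hcut⟩
    refine cycleGraph_cutPosition_le h hab fun hcut' => hcut ?_
    rcases hcut' with ⟨rfl, rfl⟩ | ⟨rfl, rfl⟩ <;> simp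

/-- For every `n ≥ 6`, removing any single cycle edge `vᵢv_{i+1}`
from `Gₙ` yields a planar graph. -/
theorem Gn_minus_cycle_edge_planar (n : ℕ) (hn : 6 ≤ n) (i : Fin (n - 2)) :
    IsPlanar ((Gn n).deleteEdges {s(Sum.inl i, Sum.inl (i + ⟨1, by omega⟩))}) := by
  refine (isPathLayout_join_cycleGraph_deleteEdges _ i ⊤).isPlanar (p := .inr 0) (q := .inr 1) ?_
  rintro (a | t) ht
  · exact absurd ⟨a, rfl⟩ ht
  · fin_cases t <;> simp
end

section
/- For every n ≥ 5 there exists a simple graph on n vertices with exactly 3n − 5 edges that is non-planar but becomes planar after removing a single suitable edge. -/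
open SimpleGraph

/-!
The witness is `Gₙ = C_{n-2} + K₂`, which has `(n - 2) + 1 + 2(n - 2) = 3n - 5` edges; contracting
the cycle to a triangle exhibits a `K₅` minor. Deleting the pole edge leaves the bipyramid
`C_{n-2} + 2K₁`. In a `K₅` or `K₃,₃` minor model in the bipyramid at most two branch sets contain
an apex, and the others are arcs of the cycle. Cutting the cycle at a vertex outside these arcs
turns them into integer intervals, which are adjacent only when they abut; the union of two abutting
intervals is an interval, so no third disjoint interval lies between them. This rules out three
pairwise abutting intervals (`K₅`) and four abutting along a 4-cycle (`K₃,₃` with an apex set on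
each side). If all apex sets lie on one side of `K₃,₃`, some arc on that side is adjacent to the
three arcs of the other side; cutting the cycle where it meets one of them puts it at an end of the
path, where it can abut only one further interval.
-/

open Function Set

variable {V V' W W' α β : Type*}

section Join

variable {G : SimpleGraph α} {H : SimpleGraph β}

@[simp] theorem join_adj_inl_inl {a b : α} : (Join G H).Adj (.inl a) (.inl b) ↔ G.Adj a b :=
  Iff.rfl

@[simp] theorem join_adj_inl_inr {a : α} {b : β} : (Join G H).Adj (.inl a) (.inr b) := trivial

@[simp] theorem join_adj_inr_inl {a : α} {b : β} : (Join G H).Adj (.inr b) (.inl a) := trivial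

@[simp] theorem join_adj_inr_inr {a b : β} : (Join G H).Adj (.inr a) (.inr b) ↔ H.Adj a b :=
  Iff.rfl

theorem join_top_top : Join (⊤ : SimpleGraph α) (⊤ : SimpleGraph β) = ⊤ := by
  ext (a | a) (b | b) <;> simp

theorem ncard_edgeSet_join [Fintype α] [Fintype β] (G : SimpleGraph α) (H : SimpleGraph β) :
    (Join G H).edgeSet.ncard =
      G.edgeSet.ncard + H.edgeSet.ncard + Fintype.card α * Fintype.card β := by
  classical
  have degree_inl (a : α) : (Join G H).degree (.inl a) = G.degree a + Fintype.card β := by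
    rw [← card_neighborFinset_eq_degree, ← card_neighborFinset_eq_degree, ← Finset.card_univ,
      ← Finset.card_disjSum]
    congr 1
    ext (b | b) <;> simp
  have degree_inr (b : β) : (Join G H).degree (.inr b) = Fintype.card α + H.degree b := by
    rw [← card_neighborFinset_eq_degree, ← card_neighborFinset_eq_degree, ← Finset.card_univ,
      ← Finset.card_disjSum]
    congr 1
    ext (a | a) <;> simp
  have hsum := (Join G H).sum_degrees_eq_twice_card_edges
  rw [Fintype.sum_sum_type] at hsum
  simp only [degree_inl, degree_inr, Finset.sum_add_distrib, Finset.sum_const, Finset.card_univ,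
    smul_eq_mul, G.sum_degrees_eq_twice_card_edges, H.sum_degrees_eq_twice_card_edges] at hsum
  simp only [← coe_edgeFinset, ncard_coe_finset]
  linarith

end Join

theorem ncard_edgeSet_cycleGraph {m : ℕ} (hm : 3 ≤ m) : (cycleGraph m).edgeSet.ncard = m := by
  obtain ⟨k, rfl⟩ : ∃ k, m = k + 3 := ⟨m - 3, by omega⟩
  have hsum := (cycleGraph (k + 3)).sum_degrees_eq_twice_card_edges
  simp only [cycleGraph_degree_three_le, Finset.sum_const, Finset.card_univ, Fintype.card_fin,
    smul_eq_mul] at hsum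
  rw [← coe_edgeFinset, ncard_coe_finset]
  omega

theorem ncard_edgeSet_Gn {n : ℕ} (hn : 5 ≤ n) : (Gn n).edgeSet.ncard = 3 * n - 5 := by
  classical
  rw [Gn, ncard_edgeSet_join, ncard_edgeSet_cycleGraph (by omega), ← coe_edgeFinset (⊤ : _),
    ncard_coe_finset, card_edgeFinset_top_eq_card_choose_two]
  simp only [Fintype.card_fin, Nat.choose_self]
  omega

structure IsMinorModel (H : SimpleGraph W) (G : SimpleGraph V) (f : W → Set V) : Prop where
  nonempty : ∀ w, (f w).Nonempty
  connected : ∀ w, (G.induce (f w)).Connected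
  disjoint : Pairwise fun w₁ w₂ => Disjoint (f w₁) (f w₂)
  adj : ∀ ⦃a b⦄, H.Adj a b → ∃ u ∈ f a, ∃ v ∈ f b, G.Adj u v

theorem isMinor_iff_exists_isMinorModel {H : SimpleGraph W} {G : SimpleGraph V} :
    IsMinor H G ↔ ∃ f, IsMinorModel H G f :=
  ⟨fun ⟨f, h₁, h₂, h₃, h₄⟩ => ⟨f, h₁, h₂, h₃, h₄⟩, fun ⟨f, h₁, h₂, h₃, h₄⟩ => ⟨f, h₁, h₂, h₃, h₄⟩⟩

section Connectivity

variable {G : SimpleGraph V} {G' : SimpleGraph V'}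

theorem connected_induce_range (φ : G →g G') (hG : G.Connected) :
    (G'.induce (range φ)).Connected :=
  hG.map ⟨fun v => ⟨φ v, v, rfl⟩, φ.map_adj⟩ (by rintro ⟨_, v, rfl⟩; exact ⟨v, rfl⟩)

theorem connected_induce_image (φ : G →g G') {S : Set V} (hS : (G.induce S).Connected) :
    (G'.induce (φ '' S)).Connected := by
  rw [image_eq_range]
  exact connected_induce_range (φ.comp (Embedding.induce S).toHom) hS

theorem connected_induce_singleton (v : V) : (G.induce {v}).Connected := by
  rw [induce_singleton_eq_top]
  exact connected_top

end Connectivity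

namespace IsMinor

variable {H : SimpleGraph W} {H' : SimpleGraph W'} {G : SimpleGraph V} {G' : SimpleGraph V'}

protected theorem refl (G : SimpleGraph V) : IsMinor G G :=
  ⟨fun v => {v}, fun _ => singleton_nonempty _, fun _ => connected_induce_singleton _,
    fun _ _ h => disjoint_singleton.mpr h, fun a b h => ⟨a, rfl, b, rfl, h⟩⟩

theorem map_right (h : IsMinor H G) (φ : G →g G') (hφ : Injective φ) : IsMinor H G' := by
  obtain ⟨f, hne, hconn, hdisj, hadj⟩ := h
  refine ⟨fun w => φ '' f w, fun w => (hne w).image _, fun w => connected_induce_image φ (hconn w),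
    fun _ _ h => disjoint_image_of_injective hφ (hdisj h), fun a b hab => ?_⟩
  obtain ⟨u, hu, v, hv, huv⟩ := hadj hab
  exact ⟨φ u, mem_image_of_mem _ hu, φ v, mem_image_of_mem _ hv, φ.map_adj huv⟩

theorem comap_left (h : IsMinor H G) (ψ : H' →g H) (hψ : Injective ψ) : IsMinor H' G := by
  obtain ⟨f, hne, hconn, hdisj, hadj⟩ := h
  exact ⟨f ∘ ψ, fun _ => hne _, fun _ => hconn _, fun _ _ h => hdisj (hψ.ne h),
    fun _ _ h => hadj (ψ.map_adj h)⟩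

theorem join {H₁ : SimpleGraph W} {H₂ : SimpleGraph W'} {G₁ : SimpleGraph V}
    {G₂ : SimpleGraph V'} (h₁ : IsMinor H₁ G₁) (h₂ : IsMinor H₂ G₂) :
    IsMinor (Join H₁ H₂) (Join G₁ G₂) := by
  obtain ⟨f₁, hne₁, hconn₁, hdisj₁, hadj₁⟩ := h₁
  obtain ⟨f₂, hne₂, hconn₂, hdisj₂, hadj₂⟩ := h₂
  have hlr : ∀ (A : Set V) (B : Set V'),
      Disjoint (Sum.inl '' A : Set (V ⊕ V')) (Sum.inr '' B) := fun A B =>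
    isCompl_range_inl_range_inr.disjoint.mono (image_subset_range _ _) (image_subset_range _ _)
  refine ⟨Sum.elim (fun w => Sum.inl '' f₁ w) (fun w => Sum.inr '' f₂ w), ?_, ?_, ?_, ?_⟩
  · rintro (w | w)
    exacts [(hne₁ w).image _, (hne₂ w).image _]
  · rintro (w | w)
    exacts [connected_induce_image (G' := Join G₁ G₂) ⟨Sum.inl, id⟩ (hconn₁ w),
      connected_induce_image (G' := Join G₁ G₂) ⟨Sum.inr, id⟩ (hconn₂ w)]
  · rintro (w | w) (w' | w') h
    · exact disjoint_image_of_injective Sum.inl_injective (hdisj₁ fun e => h (congrArg _ e))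
    · exact hlr _ _
    · exact (hlr _ _).symm
    · exact disjoint_image_of_injective Sum.inr_injective (hdisj₂ fun e => h (congrArg _ e))
  · rintro (a | a) (b | b) h
    · obtain ⟨u, hu, v, hv, huv⟩ := hadj₁ h
      exact ⟨_, mem_image_of_mem _ hu, _, mem_image_of_mem _ hv, huv⟩
    · obtain ⟨u, hu⟩ := hne₁ a
      obtain ⟨v, hv⟩ := hne₂ b
      exact ⟨_, mem_image_of_mem _ hu, _, mem_image_of_mem _ hv, trivial⟩
    · obtain ⟨u, hu⟩ := hne₂ a
      obtain ⟨v, hv⟩ := hne₁ b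
      exact ⟨_, mem_image_of_mem _ hu, _, mem_image_of_mem _ hv, trivial⟩
    · obtain ⟨u, hu, v, hv, huv⟩ := hadj₂ h
      exact ⟨_, mem_image_of_mem _ hu, _, mem_image_of_mem _ hv, huv⟩

end IsMinor

theorem IsPlanar.of_injective_hom {G : SimpleGraph V} {G' : SimpleGraph V'} (h : IsPlanar G')
    (φ : G →g G') (hφ : Injective φ) : IsPlanar G :=
  ⟨fun h₅ => h.1 (h₅.map_right φ hφ), fun h₃₃ => h.2 (h₃₃.map_right φ hφ)⟩

section Cycle

variable {m : ℕ}

theorem cycleGraph_adj_iff_val (hm : 2 ≤ m) {i j : Fin m} :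
    (cycleGraph m).Adj i j ↔ (i : ℕ) + 1 = j ∨ (j : ℕ) + 1 = i ∨
      (i : ℕ) = 0 ∧ (j : ℕ) + 1 = m ∨ (j : ℕ) = 0 ∧ (i : ℕ) + 1 = m := by
  have := i.isLt
  have := j.isLt
  rw [cycleGraph_adj']
  rcases lt_trichotomy i j with h | rfl | h
  · rw [Fin.coe_sub_iff_lt.mpr h, Fin.sub_val_of_le h.le]
    rw [Fin.lt_def] at h
    omega
  · rw [Fin.sub_val_of_le le_rfl]
    omega
  · rw [Fin.coe_sub_iff_lt.mpr h, Fin.sub_val_of_le h.le]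
    rw [Fin.lt_def] at h
    omega

theorem isMinor_completeGraph_three_cycleGraph (hm : 3 ≤ m) :
    IsMinor (completeGraph (Fin 3)) (cycleGraph m) := by
  obtain ⟨k, rfl⟩ : ∃ k, m = k + 3 := ⟨m - 3, by omega⟩
  have adj_iff := @cycleGraph_adj_iff_val (k + 3) (by omega)
  let arc : pathGraph (k + 1) →g cycleGraph (k + 3) :=
    ⟨fun j => ⟨j + 2, by omega⟩, fun h => adj_iff.mpr (by rw [pathGraph_adj] at h; simp; omega)⟩
  have h₀₁ : (cycleGraph (k + 3)).Adj 0 1 := adj_iff.mpr (by simp)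
  have h₁₂ : (cycleGraph (k + 3)).Adj 1 (arc 0) := adj_iff.mpr (by simp [arc])
  have h₂₀ : (cycleGraph (k + 3)).Adj (arc (Fin.last k)) 0 := adj_iff.mpr (by simp [arc])
  refine ⟨![{0}, {1}, range arc], ?_, ?_, ?_, ?_⟩
  · intro w
    fin_cases w
    exacts [singleton_nonempty _, singleton_nonempty _, range_nonempty _]
  · intro w
    fin_cases w
    exacts [connected_induce_singleton _, connected_induce_singleton _,
      connected_induce_range arc (pathGraph_connected k)]
  · intro i j hij
    fin_cases i <;> fin_cases j <;> simp at hij ⊢ <;>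
    · intro x hx
      simpa [arc] using congrArg Fin.val hx
  · intro i j hij
    fin_cases i <;> fin_cases j <;> simp at hij
    · exact ⟨_, rfl, _, rfl, h₀₁⟩
    · exact ⟨_, rfl, _, mem_range_self _, h₂₀.symm⟩
    · exact ⟨_, rfl, _, rfl, h₀₁.symm⟩
    · exact ⟨_, rfl, _, mem_range_self _, h₁₂⟩
    · exact ⟨_, mem_range_self _, _, rfl, h₂₀⟩
    · exact ⟨_, mem_range_self _, _, rfl, h₁₂.symm⟩

end Cycle

theorem not_isPlanar_Gn {n : ℕ} (hn : 5 ≤ n) : ¬ IsPlanar (Gn n) := by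
  let ι : Fin (3 + 2) ≃ Fin 3 ⊕ Fin 2 := finSumFinEquiv.symm
  let K₅ : completeGraph (Fin 5) →g Join (completeGraph (Fin 3)) (⊤ : SimpleGraph (Fin 2)) :=
    ⟨ι, fun h => by rw [join_top_top]; exact ι.injective.ne h.ne⟩
  exact fun h => h.1 <|
    ((isMinor_completeGraph_three_cycleGraph (by omega)).join (IsMinor.refl ⊤)).comap_left K₅
      ι.injective

theorem SimpleGraph.Connected.ordConnected_range {G : SimpleGraph V} (hG : G.Connected)
    {f : V → ℤ} (hf : ∀ x y, G.Adj x y → f x ≤ f y + 1) : (range f).OrdConnected := by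
  have key {u w : V} (p : G.Walk u w) : ∀ c, f u ≤ c → c ≤ f w → c ∈ range f := by
    induction p with
    | nil => exact fun c h₁ h₂ => ⟨_, le_antisymm h₁ h₂⟩
    | @cons u y w h p ih =>
      intro c h₁ h₂
      by_cases hc : f y ≤ c
      · exact ih c hc h₂
      · exact ⟨u, by have := hf y u h.symm; omega⟩
  exact ⟨by rintro _ ⟨u, rfl⟩ _ ⟨w, rfl⟩ c ⟨h₁, h₂⟩; exact key (hG.preconnected u w).some c h₁ h₂⟩

theorem ordConnected_image_of_connected_induce {G : SimpleGraph V} {A : Set V}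
    (hA : (G.induce A).Connected) {f : V → ℤ} (hf : ∀ x ∈ A, ∀ y ∈ A, G.Adj x y → f x ≤ f y + 1) :
    (f '' A).OrdConnected := by
  rw [image_eq_range]
  exact hA.ordConnected_range fun x y h => hf _ x.2 _ y.2 h

def Abut (S T : Set ℤ) : Prop := ∃ s ∈ S, ∃ t ∈ T, s + 1 = t ∨ t + 1 = s

theorem Abut.ordConnected_union {S T : Set ℤ} (h : Abut S T) (hS : S.OrdConnected)
    (hT : T.OrdConnected) : (S ∪ T).OrdConnected := by
  obtain ⟨s₀, hs₀, t₀, ht₀, hst⟩ := h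
  refine ⟨fun x hx y hy z ⟨hxz, hzy⟩ => ?_⟩
  by_contra hz
  have hS' : ∀ p ∈ S, ∀ q ∈ S, ¬ (p ≤ z ∧ z ≤ q) := fun p hp q hq h => hz (.inl (hS.out hp hq h))
  have hT' : ∀ p ∈ T, ∀ q ∈ T, ¬ (p ≤ z ∧ z ≤ q) := fun p hp q hq h => hz (.inr (hT.out hp hq h))
  rcases hx with hx | hx <;> rcases hy with hy | hy
  · exact hS' x hx y hy ⟨hxz, hzy⟩
  · have := hS' x hx s₀ hs₀
    have := hT' t₀ ht₀ y hy
    omega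
  · have := hT' x hx t₀ ht₀
    have := hS' s₀ hs₀ y hy
    omega
  · exact hT' x hx y hy ⟨hxz, hzy⟩

theorem Abut.lt_or_lt_of_notMem {S T : Set ℤ} (h : Abut S T) (hS : S.OrdConnected)
    (hT : T.OrdConnected) {s t u : ℤ} (hs : s ∈ S) (ht : t ∈ T) (huS : u ∉ S) (huT : u ∉ T) :
    u < s ∧ u < t ∨ s < u ∧ t < u := by
  have hu : u ∉ uIcc s t := fun hu =>
    not_or.mpr ⟨huS, huT⟩ ((h.ordConnected_union hS hT).uIcc_subset (.inl hs) (.inr ht) hu)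
  rw [mem_uIcc] at hu
  omega

section CycleCoordinates

variable {m : ℕ}

/-- The position of `x` on the path obtained by cutting the cycle at `v`, counted from the
successor of `v`; the cut vertex `v` itself gets position `m - 1`. -/
def cyclePos (v x : Fin m) : ℤ :=
  if (v : ℕ) < x then (x : ℤ) - v - 1 else (x : ℤ) + m - v - 1

theorem cyclePos_injective (v : Fin m) : Injective (cyclePos v) := by
  intro x y h
  have := x.isLt
  have := y.isLt
  have := v.isLt
  unfold cyclePos at h
  apply Fin.ext
  split_ifs at h <;> omega

theorem cyclePos_mem_Icc {v x : Fin m} (hx : x ≠ v) : cyclePos v x ∈ Icc 0 ((m : ℤ) - 2) := by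
  rw [mem_Icc]
  have := x.isLt
  have := v.isLt
  have := Fin.val_ne_of_ne hx
  unfold cyclePos
  split_ifs <;> omega

theorem cyclePos_adj (hm : 2 ≤ m) {v x y : Fin m} (h : (cycleGraph m).Adj x y) (hx : x ≠ v)
    (hy : y ≠ v) : cyclePos v x + 1 = cyclePos v y ∨ cyclePos v y + 1 = cyclePos v x := by
  rw [cycleGraph_adj_iff_val hm] at h
  have := x.isLt
  have := y.isLt
  have := v.isLt
  have := Fin.val_ne_of_ne hx
  have := Fin.val_ne_of_ne hy
  unfold cyclePos
  split_ifs <;> omega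

theorem cyclePos_of_adj (hm : 2 ≤ m) {v y : Fin m} (h : (cycleGraph m).Adj v y) :
    cyclePos v y = 0 ∨ cyclePos v y = m - 2 := by
  rw [cycleGraph_adj_iff_val hm] at h
  have := y.isLt
  have := v.isLt
  unfold cyclePos
  split_ifs <;> omega

end CycleCoordinates

theorem exists_index_of_inr [Nonempty W] {f : W → Set (α ⊕ β)}
    (hd : Pairwise fun w₁ w₂ => Disjoint (f w₁) (f w₂)) :
    ∃ g : β → W, ∀ w t, .inr t ∈ f w → w = g t := by
  have (t : β) : ∃ i, ∀ w, .inr t ∈ f w → w = i := by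
    by_cases h : ∃ i, .inr t ∈ f i
    · obtain ⟨i, hi⟩ := h
      exact ⟨i, fun w hw => hd.eq (not_disjoint_iff.mpr ⟨_, hw, hi⟩)⟩
    · exact ⟨Classical.arbitrary W, fun w hw => (h ⟨w, hw⟩).elim⟩
  choose g hg using this
  exact ⟨g, fun w t => hg t w⟩

theorem subset_range_inl_of_forall_ne {f : W → Set (α ⊕ β)} {g : β → W}
    (hg : ∀ w t, .inr t ∈ f w → w = g t) {w : W} (hw : ∀ t, w ≠ g t) :
    f w ⊆ range Sum.inl := by
  rintro (a | t) hx
  · exact ⟨a, rfl⟩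
  · exact (hw t (hg w t hx)).elim

theorem subset_range_inl_of_pairwise_ne {f : W → Set (α ⊕ Fin 2)} {g : Fin 2 → W}
    (hg : ∀ w t, .inr t ∈ f w → w = g t) {w₁ w₂ w₃ : W} (h₁₂ : w₁ ≠ w₂) (h₁₃ : w₁ ≠ w₃)
    (h₂₃ : w₂ ≠ w₃) : f w₁ ⊆ range Sum.inl ∨ f w₂ ⊆ range Sum.inl ∨ f w₃ ⊆ range Sum.inl := by
  have impure {w : W} (hw : ¬ f w ⊆ range Sum.inl) : ∃ t, w = g t := by
    by_contra! h
    exact hw (subset_range_inl_of_forall_ne hg h)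
  by_contra! h
  obtain ⟨t₁, rfl⟩ := impure h.1
  obtain ⟨t₂, rfl⟩ := impure h.2.1
  obtain ⟨t₃, rfl⟩ := impure h.2.2
  have pigeonhole : ∀ t₁ t₂ t₃ : Fin 2, t₁ = t₂ ∨ t₁ = t₃ ∨ t₂ = t₃ := by decide
  rcases pigeonhole t₁ t₂ t₃ with rfl | rfl | rfl <;> simp_all

theorem exists_subset_range_inl_of_injective {f : W → Set (α ⊕ Fin 2)} {g : Fin 2 → W}
    (hg : ∀ w t, .inr t ∈ f w → w = g t) {ι : Fin 3 → W} (hι : Injective ι) :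
    ∃ i, f (ι i) ⊆ range Sum.inl := by
  rcases subset_range_inl_of_pairwise_ne hg (hι.ne (by decide : (0 : Fin 3) ≠ 1))
    (hι.ne (by decide : (0 : Fin 3) ≠ 2)) (hι.ne (by decide : (1 : Fin 3) ≠ 2)) with h | h | h
  exacts [⟨0, h⟩, ⟨1, h⟩, ⟨2, h⟩]

theorem Fin.exists_triangle_avoiding (i j : Fin 5) :
    ∃ a b c d e : Fin 5, a ≠ b ∧ a ≠ c ∧ b ≠ c ∧ d ≠ e ∧
      ∀ w ∈ ({a, b, c} : Finset (Fin 5)), w ∉ ({d, e, i, j} : Finset (Fin 5)) := by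
  have hij : 3 ≤ ({i, j}ᶜ : Finset (Fin 5)).card := by
    rw [Finset.card_compl, Fintype.card_fin]
    have := Finset.card_le_two (a := i) (b := j)
    omega
  obtain ⟨T, hT, hT₃⟩ := Finset.exists_subset_card_eq hij
  obtain ⟨a, b, c, hab, hac, hbc, rfl⟩ := Finset.card_eq_three.mp hT₃
  obtain ⟨d, e, hde, hTc⟩ : ∃ d e, d ≠ e ∧ ({a, b, c}ᶜ : Finset (Fin 5)) = {d, e} :=
    Finset.card_eq_two.mp (by rw [Finset.card_compl, hT₃]; rfl)
  refine ⟨a, b, c, d, e, hab, hac, hbc, hde, fun w hw => ?_⟩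
  have hwij := hT hw
  have hwde : w ∉ ({d, e} : Finset (Fin 5)) := by rwa [← hTc, Finset.mem_compl, not_not]
  simp only [Finset.mem_compl, Finset.mem_insert, Finset.mem_singleton, not_or] at hwij hwde ⊢
  exact ⟨hwde.1, hwde.2, hwij.1, hwij.2⟩

def bipyramid (m : ℕ) : SimpleGraph (Fin m ⊕ Fin 2) := Join (cycleGraph m) ⊥

theorem Gn_deleteEdges (n : ℕ) :
    (Gn n).deleteEdges {s(.inr 0, .inr 1)} = bipyramid (n - 2) := by
  ext (a | a) (b | b) <;> simp [Gn, bipyramid]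
  omega

namespace bipyramid

variable {m : ℕ}

/-- The apexes get distinct negative values only so that `coord v` is injective. -/
def coord (v : Fin m) : Fin m ⊕ Fin 2 → ℤ := Sum.elim (cyclePos v) fun t => -1 - (t : ℕ)

theorem coord_injective (v : Fin m) : Injective (coord v) := by
  refine (cyclePos_injective v).sumElim (fun s t h => Fin.ext (by simp at h; omega)) fun x t => ?_
  have := x.isLt
  unfold cyclePos
  split_ifs <;> omega

theorem coord_adj (hm : 2 ≤ m) {v : Fin m} {x y : Fin m ⊕ Fin 2} (hx : x ∈ Sum.inl '' {v}ᶜ)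
    (hy : y ∈ Sum.inl '' {v}ᶜ) (h : (bipyramid m).Adj x y) :
    coord v x + 1 = coord v y ∨ coord v y + 1 = coord v x := by
  obtain ⟨i, hi, rfl⟩ := hx
  obtain ⟨j, hj, rfl⟩ := hy
  exact cyclePos_adj hm h hi hj

theorem coord_image_subset_Icc {v : Fin m} {B : Set (Fin m ⊕ Fin 2)}
    (hB : B ⊆ Sum.inl '' {v}ᶜ) : coord v '' B ⊆ Icc 0 (m - 2) := by
  rintro _ ⟨x, hx, rfl⟩
  obtain ⟨i, hi, rfl⟩ := hB hx
  exact cyclePos_mem_Icc hi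

theorem ordConnected_coord_image (hm : 2 ≤ m) {v : Fin m} {B : Set (Fin m ⊕ Fin 2)}
    (hB : B ⊆ Sum.inl '' {v}ᶜ) (hc : ((bipyramid m).induce B).Connected) :
    (coord v '' B).OrdConnected :=
  ordConnected_image_of_connected_induce hc fun x hx y hy h => by
    rcases coord_adj hm (hB hx) (hB hy) h with h | h <;> omega

theorem exists_inl_of_adj {x y : Fin m ⊕ Fin 2} (h : (bipyramid m).Adj x y) :
    ∃ v, x = .inl v ∨ y = .inl v := by
  rcases x with v | s
  · exact ⟨v, .inl rfl⟩
  rcases y with v | t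
  · exact ⟨v, .inr rfl⟩
  · exact h.elim

theorem subset_inl_image_compl {v : Fin m} {B C : Set (Fin m ⊕ Fin 2)} (hB : B ⊆ range Sum.inl)
    (hv : .inl v ∈ C) (hBC : Disjoint B C) : B ⊆ Sum.inl '' {v}ᶜ := by
  intro x hx
  obtain ⟨i, rfl⟩ := hB hx
  refine ⟨i, fun hi => Set.disjoint_left.mp hBC hx ?_, rfl⟩
  rwa [mem_singleton_iff.mp hi]

variable {K : SimpleGraph W} {f : W → Set (Fin m ⊕ Fin 2)}

theorem lt_or_lt_of_adj (hm : 2 ≤ m) (hf : IsMinorModel K (bipyramid m) f) {v : Fin m}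
    {w₁ w₂ w₃ : W} (h₁ : f w₁ ⊆ Sum.inl '' {v}ᶜ) (h₂ : f w₂ ⊆ Sum.inl '' {v}ᶜ)
    (h₁₂ : K.Adj w₁ w₂) (h₃₁ : w₃ ≠ w₁) (h₃₂ : w₃ ≠ w₂) {s t u : ℤ} (hs : s ∈ coord v '' f w₁)
    (ht : t ∈ coord v '' f w₂) (hu : u ∈ coord v '' f w₃) :
    u < s ∧ u < t ∨ s < u ∧ t < u := by
  have habut : Abut (coord v '' f w₁) (coord v '' f w₂) := by
    obtain ⟨x, hx, y, hy, hxy⟩ := hf.adj h₁₂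
    exact ⟨_, mem_image_of_mem _ hx, _, mem_image_of_mem _ hy, coord_adj hm (h₁ hx) (h₂ hy) hxy⟩
  have hnotMem {w : W} (hw : w₃ ≠ w) : u ∉ coord v '' f w :=
    Set.disjoint_left.mp (disjoint_image_of_injective (coord_injective v) (hf.disjoint hw)) hu
  exact habut.lt_or_lt_of_notMem (ordConnected_coord_image hm h₁ (hf.connected w₁))
    (ordConnected_coord_image hm h₂ (hf.connected w₂)) hs ht (hnotMem h₃₁) (hnotMem h₃₂)

theorem not_triangle (hm : 2 ≤ m) (hf : IsMinorModel K (bipyramid m) f) {v : Fin m} {a b c : W}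
    (ha : f a ⊆ Sum.inl '' {v}ᶜ) (hb : f b ⊆ Sum.inl '' {v}ᶜ) (hc : f c ⊆ Sum.inl '' {v}ᶜ)
    (hab : K.Adj a b) (hac : K.Adj a c) (hbc : K.Adj b c) : False := by
  obtain ⟨ra, hra⟩ := (hf.nonempty a).image (coord v)
  obtain ⟨rb, hrb⟩ := (hf.nonempty b).image (coord v)
  obtain ⟨rc, hrc⟩ := (hf.nonempty c).image (coord v)
  have := lt_or_lt_of_adj hm hf ha hb hab hac.ne' hbc.ne' hra hrb hrc
  have := lt_or_lt_of_adj hm hf ha hc hac hab.ne' hbc.ne hra hrc hrb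
  have := lt_or_lt_of_adj hm hf hb hc hbc hab.ne hac.ne hrb hrc hra
  omega

theorem not_cycle4 (hm : 2 ≤ m) (hf : IsMinorModel K (bipyramid m) f) {v : Fin m}
    {a₁ a₂ b₁ b₂ : W} (ha₁ : f a₁ ⊆ Sum.inl '' {v}ᶜ) (ha₂ : f a₂ ⊆ Sum.inl '' {v}ᶜ)
    (hb₁ : f b₁ ⊆ Sum.inl '' {v}ᶜ) (hb₂ : f b₂ ⊆ Sum.inl '' {v}ᶜ) (h₁₁ : K.Adj a₁ b₁)
    (h₁₂ : K.Adj a₁ b₂) (h₂₁ : K.Adj a₂ b₁) (h₂₂ : K.Adj a₂ b₂) (ha : a₁ ≠ a₂) (hb : b₁ ≠ b₂) :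
    False := by
  obtain ⟨r₁, hr₁⟩ := (hf.nonempty a₁).image (coord v)
  obtain ⟨r₂, hr₂⟩ := (hf.nonempty a₂).image (coord v)
  obtain ⟨s₁, hs₁⟩ := (hf.nonempty b₁).image (coord v)
  obtain ⟨s₂, hs₂⟩ := (hf.nonempty b₂).image (coord v)
  have := lt_or_lt_of_adj hm hf ha₁ hb₁ h₁₁ ha.symm h₂₁.ne hr₁ hs₁ hr₂
  have := lt_or_lt_of_adj hm hf ha₁ hb₁ h₁₁ h₁₂.ne' hb.symm hr₁ hs₁ hs₂
  have := lt_or_lt_of_adj hm hf ha₁ hb₂ h₁₂ ha.symm h₂₂.ne hr₁ hs₂ hr₂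
  have := lt_or_lt_of_adj hm hf ha₁ hb₂ h₁₂ h₁₁.ne' hb hr₁ hs₂ hs₁
  have := lt_or_lt_of_adj hm hf ha₂ hb₁ h₂₁ ha h₁₁.ne hr₂ hs₁ hr₁
  have := lt_or_lt_of_adj hm hf ha₂ hb₁ h₂₁ h₂₂.ne' hb.symm hr₂ hs₁ hs₂
  have := lt_or_lt_of_adj hm hf ha₂ hb₂ h₂₂ ha h₁₂.ne hr₂ hs₂ hr₁
  have := lt_or_lt_of_adj hm hf ha₂ hb₂ h₂₂ h₂₁.ne' hb hr₂ hs₂ hs₁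
  omega

theorem not_claw (hm : 2 ≤ m) (hf : IsMinorModel K (bipyramid m) f) {c ℓ₁ ℓ₂ ℓ₃ : W}
    (hc : f c ⊆ range Sum.inl) (hℓ₁ : f ℓ₁ ⊆ range Sum.inl) (hℓ₂ : f ℓ₂ ⊆ range Sum.inl)
    (hℓ₃ : f ℓ₃ ⊆ range Sum.inl) (h₁ : K.Adj c ℓ₁) (h₂ : K.Adj c ℓ₂) (h₃ : K.Adj c ℓ₃)
    (h₁₂ : ℓ₁ ≠ ℓ₂) (h₁₃ : ℓ₁ ≠ ℓ₃) (h₂₃ : ℓ₂ ≠ ℓ₃) : False := by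
  obtain ⟨x, hx, y, hy, hxy⟩ := hf.adj h₁
  obtain ⟨j, rfl⟩ := hc hx
  obtain ⟨v, rfl⟩ := hℓ₁ hy
  have avoid {w : W} (hw : f w ⊆ range Sum.inl) (hwℓ : w ≠ ℓ₁) : f w ⊆ Sum.inl '' {v}ᶜ :=
    subset_inl_image_compl hw hy (hf.disjoint hwℓ)
  -- The cut vertex `v` is adjacent to `j`, so `f c` reaches an end of the path.
  have hj : coord v (.inl j) = 0 ∨ coord v (.inl j) = m - 2 := cyclePos_of_adj hm hxy.symm
  obtain ⟨r₂, hr₂⟩ := (hf.nonempty ℓ₂).image (coord v)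
  obtain ⟨r₃, hr₃⟩ := (hf.nonempty ℓ₃).image (coord v)
  obtain ⟨_, _⟩ := coord_image_subset_Icc (avoid hℓ₂ h₁₂.symm) hr₂
  obtain ⟨_, _⟩ := coord_image_subset_Icc (avoid hℓ₃ h₁₃.symm) hr₃
  have := lt_or_lt_of_adj hm hf (avoid hc h₁.ne) (avoid hℓ₂ h₁₂.symm) h₂ h₃.ne' h₂₃.symm
    (mem_image_of_mem _ hx) hr₂ hr₃
  have := lt_or_lt_of_adj hm hf (avoid hc h₁.ne) (avoid hℓ₃ h₁₃.symm) h₃ h₂.ne' h₂₃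
    (mem_image_of_mem _ hx) hr₃ hr₂
  omega

end bipyramid

section Planarity

variable {m : ℕ}

theorem not_isMinor_completeGraph_five_bipyramid (hm : 2 ≤ m) :
    ¬ IsMinor (completeGraph (Fin 5)) (bipyramid m) := by
  intro h
  obtain ⟨f, hf⟩ := isMinor_iff_exists_isMinorModel.mp h
  obtain ⟨g, hg⟩ := exists_index_of_inr hf.disjoint
  obtain ⟨a, b, c, d, e, hab, hac, hbc, hde, hout⟩ := Fin.exists_triangle_avoiding (g 0) (g 1)
  obtain ⟨x, hx, y, hy, hxy⟩ := hf.adj hde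
  obtain ⟨v, hv⟩ := bipyramid.exists_inl_of_adj hxy
  have hv' : .inl v ∈ f d ∪ f e := by
    rcases hv with rfl | rfl
    exacts [.inl hx, .inr hy]
  have avoid {w : Fin 5} (hw : w ∈ ({a, b, c} : Finset (Fin 5))) : f w ⊆ Sum.inl '' {v}ᶜ := by
    have := hout w hw
    simp only [Finset.mem_insert, Finset.mem_singleton, not_or] at this
    refine bipyramid.subset_inl_image_compl (subset_range_inl_of_forall_ne hg fun t => ?_) hv'
      (disjoint_union_right.mpr ⟨hf.disjoint this.1, hf.disjoint this.2.1⟩)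
    fin_cases t
    exacts [this.2.2.1, this.2.2.2]
  exact bipyramid.not_triangle hm hf (avoid (by simp)) (avoid (by simp)) (avoid (by simp))
    hab hac hbc

theorem not_isMinor_completeBipartiteGraph_three_bipyramid (hm : 2 ≤ m) :
    ¬ IsMinor (completeBipartiteGraph (Fin 3) (Fin 3)) (bipyramid m) := by
  intro h
  obtain ⟨f, hf⟩ := isMinor_iff_exists_isMinorModel.mp h
  obtain ⟨g, hg⟩ := exists_index_of_inr hf.disjoint
  have adj (a b : Fin 3) : (completeBipartiteGraph (Fin 3) (Fin 3)).Adj (.inl a) (.inr b) := by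
    simp
  by_cases hR : ∀ b, f (.inr b) ⊆ range Sum.inl
  · obtain ⟨a, ha⟩ := exists_subset_range_inl_of_injective hg Sum.inl_injective
    exact bipyramid.not_claw hm hf ha (hR 0) (hR 1) (hR 2) (adj a 0) (adj a 1) (adj a 2)
      (by decide) (by decide) (by decide)
  by_cases hL : ∀ a, f (.inl a) ⊆ range Sum.inl
  · obtain ⟨b, hb⟩ := exists_subset_range_inl_of_injective hg Sum.inr_injective
    exact bipyramid.not_claw hm hf hb (hL 0) (hL 1) (hL 2) (adj 0 b).symm (adj 1 b).symm
      (adj 2 b).symm (by decide) (by decide) (by decide)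
  obtain ⟨b, hb⟩ := not_forall.mp hR
  obtain ⟨a, ha⟩ := not_forall.mp hL
  obtain ⟨x, hx, y, hy, hxy⟩ := hf.adj (adj a b)
  obtain ⟨v, hv⟩ := bipyramid.exists_inl_of_adj hxy
  have hv' : .inl v ∈ f (.inl a) ∪ f (.inr b) := by
    rcases hv with rfl | rfl
    exacts [.inl hx, .inr hy]
  have avoid {w} (h₁ : w ≠ .inl a) (h₂ : w ≠ .inr b) : f w ⊆ Sum.inl '' {v}ᶜ := by
    refine bipyramid.subset_inl_image_compl ?_ hv'
      (disjoint_union_right.mpr ⟨hf.disjoint h₁, hf.disjoint h₂⟩)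
    rcases subset_range_inl_of_pairwise_ne hg h₁ h₂ (by simp) with h | h | h
    exacts [h, (ha h).elim, (hb h).elim]
  exact bipyramid.not_cycle4 hm hf (a₁ := .inl (a + 1)) (a₂ := .inl (a + 2)) (b₁ := .inr (b + 1))
    (b₂ := .inr (b + 2)) (avoid (by simp) (by simp)) (avoid (by simp) (by simp))
    (avoid (by simp) (by simp)) (avoid (by simp) (by simp)) (adj _ _) (adj _ _) (adj _ _)
    (adj _ _) (by simp) (by simp)

theorem isPlanar_bipyramid (hm : 2 ≤ m) : IsPlanar (bipyramid m) :=
  ⟨not_isMinor_completeGraph_five_bipyramid hm,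
    not_isMinor_completeBipartiteGraph_three_bipyramid hm⟩

end Planarity

theorem SimpleGraph.Iso.ncard_edgeSet_eq {G : SimpleGraph V} {G' : SimpleGraph V'} (φ : G ≃g G') :
    G.edgeSet.ncard = G'.edgeSet.ncard := by
  rw [← Nat.card_coe_set_eq, ← Nat.card_coe_set_eq]
  exact Nat.card_congr φ.mapEdgeSet

theorem comap_deleteEdges_pair (e : V ≃ V') (G : SimpleGraph V') (u v : V') :
    (G.comap e).deleteEdges {s(e.symm u, e.symm v)} = (G.deleteEdges {s(u, v)}).comap e := by
  ext x y
  simp [Equiv.eq_symm_apply]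

/-- For every `n ≥ 5` there is a simple graph on `n` vertices with
exactly `3n - 5` edges that is non-planar but becomes planar after removing a
single suitable edge. -/
theorem exists_sparse_maximal (n : ℕ) (hn : 5 ≤ n) :
    ∃ G : SimpleGraph (Fin n),
      G.edgeSet.ncard = 3 * n - 5 ∧ ¬ IsPlanar G ∧
      ∃ e ∈ G.edgeSet, IsPlanar (G.deleteEdges {e}) := by
  let e : Fin n ≃ Fin (n - 2) ⊕ Fin 2 :=
    (finSumFinEquiv.trans (finCongr (by omega : n - 2 + 2 = n))).symm
  let φ := Iso.comap e (Gn n)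
  refine ⟨(Gn n).comap e, ?_, fun h => not_isPlanar_Gn hn ?_,
    s(e.symm (.inr 0), e.symm (.inr 1)), ?_, ?_⟩
  · rw [φ.ncard_edgeSet_eq, ncard_edgeSet_Gn hn]
  · exact h.of_injective_hom φ.symm.toEmbedding.toHom φ.symm.injective
  · simp [Gn]
  · rw [comap_deleteEdges_pair, Gn_deleteEdges]
    let ψ := Iso.comap e (bipyramid (n - 2))
    exact (isPlanar_bipyramid (by omega)).of_injective_hom ψ.toEmbedding.toHom ψ.injective
end

section
/- For n ≥ 7, the graph G_n does not contain K_{3,3} as a subgraph. -/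
/-!
Only the two poles lie outside the cycle, so at least four of the six vertices of a `K₃,₃` are
cycle vertices: sets `A` and `B` on the two sides, both nonempty, with every vertex of `A`
adjacent to every vertex of `B`. As the cycle has maximum degree `2`, each of `A`, `B` has at most
two elements, and as a cycle of length at least `5` contains no `4`-cycle, one of them has at most
one. Hence `#A + #B ≤ 3`, a contradiction.
-/

open SimpleGraph

open Finset

namespace SimpleGraph

variable {V : Type*} {G : SimpleGraph V}

theorem card_le_one_of_forall_adj
    (hG : ∀ ⦃a b⦄, a ≠ b → (G.commonNeighbors a b).Subsingleton)
    {A B : Finset V} (hA : 1 < #A) (hAB : ∀ a ∈ A, ∀ b ∈ B, G.Adj a b) : #B ≤ 1 := by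
  obtain ⟨a₁, ha₁, a₂, ha₂, hne⟩ := one_lt_card.1 hA
  exact card_le_one.2 fun x hx y hy =>
    hG hne ⟨hAB a₁ ha₁ x hx, hAB a₂ ha₂ x hx⟩ ⟨hAB a₁ ha₁ y hy, hAB a₂ ha₂ y hy⟩

theorem card_le_degree_of_forall_adj [G.LocallyFinite] {A : Finset V} {v : V}
    (h : ∀ a ∈ A, G.Adj v a) : #A ≤ G.degree v := by
  rw [← card_neighborFinset_eq_degree]
  exact card_le_card fun a ha => (G.mem_neighborFinset v a).2 (h a ha)

theorem card_add_card_le_three_of_forall_adj [G.LocallyFinite] (hdeg : ∀ v, G.degree v ≤ 2)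
    (hG : ∀ ⦃a b⦄, a ≠ b → (G.commonNeighbors a b).Subsingleton)
    {A B : Finset V} (hA : A.Nonempty) (hB : B.Nonempty) (hAB : ∀ a ∈ A, ∀ b ∈ B, G.Adj a b) :
    #A + #B ≤ 3 := by
  have hBA : ∀ b ∈ B, ∀ a ∈ A, G.Adj b a := fun b hb a ha => (hAB a ha b hb).symm
  obtain ⟨a, ha⟩ := hA
  obtain ⟨b, hb⟩ := hB
  have hA₂ : #A ≤ 2 := (card_le_degree_of_forall_adj (hBA b hb)).trans (hdeg b)
  have hB₂ : #B ≤ 2 := (card_le_degree_of_forall_adj (hAB a ha)).trans (hdeg a)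
  by_cases h : 1 < #A
  · have hB₁ := card_le_one_of_forall_adj hG h hAB
    omega
  · omega

theorem cycleGraph_degree_eq_two {m : ℕ} (hm : 3 ≤ m) (v : Fin m) :
    (cycleGraph m).degree v = 2 := by
  obtain ⟨k, rfl⟩ : ∃ k, m = k + 3 := ⟨m - 3, by omega⟩
  exact cycleGraph_degree_three_le

open Fin.CommRing in
theorem cycleGraph_commonNeighbors_subsingleton {m : ℕ} (hm : 5 ≤ m) {a b : Fin m} (hab : a ≠ b) :
    ((cycleGraph m).commonNeighbors a b).Subsingleton := by
  obtain ⟨k, rfl⟩ : ∃ k, m = k + 5 := ⟨m - 5, by omega⟩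
  have four_ne_zero : (4 : Fin (k + 5)) ≠ 0 := by
    simp [Fin.ext_iff, Nat.mod_eq_of_lt (show 4 < k + 5 by omega)]
  intro x hx y hy
  simp only [mem_commonNeighbors, cycleGraph_adj] at hx hy
  -- two distinct common neighbours of `a ≠ b` would force `a - b = 2 = b - a`, i.e. `4 = 0`
  grind

theorem exists_forall_adj_of_embedding_join {α β ι κ : Type*}
    [Fintype ι] [Fintype κ] [Fintype β] {G : SimpleGraph α} {H : SimpleGraph β}
    (f : ι ⊕ κ ↪ α ⊕ β)
    (hf : ∀ a b, (completeBipartiteGraph ι κ).Adj a b → (Join G H).Adj (f a) (f b)) :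
    ∃ A B : Finset α, (∀ a ∈ A, ∀ b ∈ B, G.Adj a b) ∧ #A ≤ Fintype.card ι ∧
      #B ≤ Fintype.card κ ∧ Fintype.card ι + Fintype.card κ ≤ #A + #B + Fintype.card β := by
  set L := univ.map (Function.Embedding.inl.trans f)
  set R := univ.map (Function.Embedding.inr.trans f)
  have memL : ∀ x, x ∈ L ↔ ∃ i, f (.inl i) = x := by simp [L]
  have memR : ∀ x, x ∈ R ↔ ∃ j, f (.inr j) = x := by simp [R]
  have hL : #L.toLeft + #L.toRight = Fintype.card ι := by
    rw [card_toLeft_add_card_toRight, card_map, card_univ]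
  have hR : #R.toLeft + #R.toRight = Fintype.card κ := by
    rw [card_toLeft_add_card_toRight, card_map, card_univ]
  have hdisj : Disjoint L.toRight R.toRight := by
    refine Finset.disjoint_left.2 fun x hxL hxR => ?_
    obtain ⟨i, hi⟩ := (memL _).1 (mem_toRight.1 hxL)
    obtain ⟨j, hj⟩ := (memR _).1 (mem_toRight.1 hxR)
    simpa using f.injective (hi.trans hj.symm)
  have hβ : #L.toRight + #R.toRight ≤ Fintype.card β :=
    (card_disjUnion _ _ hdisj).symm.trans_le (card_le_univ _)
  refine ⟨L.toLeft, R.toLeft, fun a ha b hb => ?_, by omega, by omega, by omega⟩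
  obtain ⟨i, hi⟩ := (memL _).1 (mem_toLeft.1 ha)
  obtain ⟨j, hj⟩ := (memR _).1 (mem_toLeft.1 hb)
  have hadj := hf (.inl i) (.inr j) (by simp)
  rwa [hi, hj] at hadj

end SimpleGraph

/-- For `n ≥ 7`, the graph `Gₙ` does not contain `K₃,₃` as a subgraph. -/
theorem Gn_no_K33_subgraph (n : ℕ) (hn : 7 ≤ n) :
    ¬ ∃ f : (Fin 3 ⊕ Fin 3) ↪ (Fin (n - 2) ⊕ Fin 2),
      ∀ a b, (completeBipartiteGraph (Fin 3) (Fin 3)).Adj a b →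
        (Gn n).Adj (f a) (f b) := by
  rintro ⟨f, hf⟩
  obtain ⟨A, B, hAB, hA, hB, hcard⟩ := exists_forall_adj_of_embedding_join f hf
  simp only [Fintype.card_fin] at hA hB hcard
  have := card_add_card_le_three_of_forall_adj
    (fun v => (cycleGraph_degree_eq_two (by omega) v).le)
    (fun _ _ => cycleGraph_commonNeighbors_subsingleton (by omega))
    (card_pos.1 (by omega)) (card_pos.1 (by omega)) hAB
  omega
end
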